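/- arXiv:1407.2983 — 3 statements merged into one kernel-verified Lean document; each statement's English description precedes it below -/
import Mathlib

section
/- For real s with 0 < Re(s) < 1 and x > 0, the integral ∫₀^∞ t^(s-1) cos(xt) dt equals Γ(s) cos(πs/2) / x^s (as an improper/conditionally convergent integral). -/
open MeasureTheory Real Complex

/-- Lower incomplete gamma function `γ(s, x)`. -/
noncomputable def lowerGamma (s : ℂ) (x : ℝ) : ℂ :=
  ∫ t in (0 : ℝ)..x, (t : ℂ) ^ (s - 1) * Complex.exp (-t)

/-- Upper incomplete gamma function `Γ(s, x)`. -/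
noncomputable def upperGamma (s : ℂ) (x : ℝ) : ℂ :=
  ∫ t in Set.Ioi x, (t : ℂ) ^ (s - 1) * Complex.exp (-t)

/-- Modified Jacobi theta function `ψ(x) = ∑_{n≥1} e^(-π n² x)`. -/
noncomputable def jpsi (x : ℝ) : ℝ := ∑' n : ℕ+, Real.exp (-π * n ^ 2 * x)

/-- The Riemann xi function `ξ(s) = (1/2) s (s-1) π^(-s/2) Γ(s/2) ζ(s)`. -/
noncomputable def xi (s : ℂ) : ℂ :=
  s * (s - 1) / 2 * ((π : ℂ) ^ (-s / 2) * Complex.Gamma (s / 2) * riemannZeta s)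

/-!
For `0 < re z` one has `∫₀^∞ t^(s-1) e^(-zt) dt = Γ(s) / z^s`: both sides are holomorphic in `z`
and agree for real `z` (Euler's integral). Integrating by parts once on `[1, T]` shows that, for
`0 < re s < 1`, the truncated integrals `∫₀^T` converge on the whole closed half-plane
`0 ≤ re z`, `z ≠ 0`, to an expression continuous in `z`, so the formula persists on the imaginary
axis. Since `cos (xt)` is the average of `e^(∓ixt)` and `(±ix)^s = x^s e^(±iπs/2)`, the theorem
follows.
-/

open Set Filter Topology

section CpowMulCexp

variable {a z : ℂ}

lemma norm_ofReal_cpow_mul_cexp {t : ℝ} (ht : 0 < t) :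
    ‖(t : ℂ) ^ a * cexp (-(z * t))‖ = t ^ a.re * rexp (-(z.re * t)) := by
  rw [norm_mul, norm_cpow_eq_rpow_re_of_pos ht, Complex.norm_exp]
  simp

lemma norm_ofReal_cpow_mul_cexp_le {t : ℝ} (ht : 0 < t) (hz : 0 ≤ z.re) :
    ‖(t : ℂ) ^ a * cexp (-(z * t))‖ ≤ t ^ a.re := by
  rw [norm_ofReal_cpow_mul_cexp ht]
  exact mul_le_of_le_one_right (by positivity)
    (Real.exp_le_one_iff.2 (by nlinarith))

lemma measurable_ofReal_cpow_mul_cexp :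
    Measurable (fun t : ℝ => (t : ℂ) ^ a * cexp (-(z * t))) := by
  fun_prop

lemma integrableOn_ofReal_cpow_mul_cexp {S : Set ℝ} (hS : S ⊆ Ioi 0) (hSm : MeasurableSet S)
    (hint : IntegrableOn (fun t : ℝ => t ^ a.re) S) (hz : 0 ≤ z.re) :
    IntegrableOn (fun t : ℝ => (t : ℂ) ^ a * cexp (-(z * t))) S :=
  hint.mono' measurable_ofReal_cpow_mul_cexp.aestronglyMeasurable <|
    (ae_restrict_mem hSm).mono fun _ ht => norm_ofReal_cpow_mul_cexp_le (hS ht) hz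

lemma continuousOn_setIntegral_ofReal_cpow_mul_cexp {S : Set ℝ} (hS : S ⊆ Ioi 0)
    (hSm : MeasurableSet S) (hint : IntegrableOn (fun t : ℝ => t ^ a.re) S) :
    ContinuousOn (fun z : ℂ => ∫ t in S, (t : ℂ) ^ a * cexp (-(z * t))) {z | 0 ≤ z.re} := by
  intro z₀ _
  refine continuousWithinAt_of_dominated
    (Eventually.of_forall fun _ => measurable_ofReal_cpow_mul_cexp.aestronglyMeasurable) ?_ hint
    (Eventually.of_forall fun t => by fun_prop)
  filter_upwards [self_mem_nhdsWithin] with z hz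
  exact (ae_restrict_mem hSm).mono fun _ ht => norm_ofReal_cpow_mul_cexp_le (hS ht) hz

lemma integrableOn_Ioi_ofReal_cpow_mul_cexp (ha : -1 < a.re) (hz : 0 < z.re) :
    IntegrableOn (fun t : ℝ => (t : ℂ) ^ a * cexp (-(z * t))) (Ioi 0) := by
  have hbound : IntegrableOn (fun t : ℝ => t ^ a.re * rexp (-z.re * t ^ (1 : ℝ))) (Ioi 0) :=
    integrableOn_rpow_mul_exp_neg_mul_rpow ha one_pos hz
  refine hbound.mono' measurable_ofReal_cpow_mul_cexp.aestronglyMeasurable <|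
    (ae_restrict_mem measurableSet_Ioi).mono fun t ht => ?_
  rw [norm_ofReal_cpow_mul_cexp ht, Real.rpow_one, neg_mul]

lemma hasDerivAt_integral_Ioi_ofReal_cpow_mul_cexp (ha : -1 < a.re) (hz : 0 < z.re) :
    HasDerivAt (fun w : ℂ => ∫ t in Ioi (0 : ℝ), (t : ℂ) ^ a * cexp (-(w * t)))
      (∫ t in Ioi (0 : ℝ), -((t : ℂ) ^ (a + 1) * cexp (-(z * t)))) z := by
  have hnhds : {w : ℂ | z.re / 2 < w.re} ∈ 𝓝 z :=
    (isOpen_lt continuous_const continuous_re).mem_nhds (by simp only [mem_ofPred_eq]; linarith)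
  have hbound := integrableOn_Ioi_ofReal_cpow_mul_cexp (a := a + 1) (z := (z.re / 2 : ℝ))
    (by simp only [add_re, one_re]; linarith) (by simp only [ofReal_re]; linarith)
  refine (hasDerivAt_integral_of_dominated_loc_of_deriv_le
    (F := fun w (t : ℝ) => (t : ℂ) ^ a * cexp (-(w * t)))
    (F' := fun w (t : ℝ) => -((t : ℂ) ^ (a + 1) * cexp (-(w * t)))) hnhds
    (Eventually.of_forall fun _ => measurable_ofReal_cpow_mul_cexp.aestronglyMeasurable)
    (integrableOn_Ioi_ofReal_cpow_mul_cexp ha hz)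
    measurable_ofReal_cpow_mul_cexp.aestronglyMeasurable.neg ?_ hbound.norm ?_).2
  · filter_upwards [ae_restrict_mem measurableSet_Ioi] with t (ht : 0 < t) w (hw : z.re / 2 < w.re)
    rw [norm_neg, norm_ofReal_cpow_mul_cexp ht, norm_ofReal_cpow_mul_cexp ht]
    simp only [add_re, one_re, ofReal_re]
    gcongr
  · filter_upwards [ae_restrict_mem measurableSet_Ioi] with t (ht : 0 < t) w _
    have hpow : (t : ℂ) ^ (a + 1) = (t : ℂ) ^ a * t := by
      rw [cpow_add _ _ (ofReal_ne_zero.2 ht.ne'), cpow_one]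
    have := ((hasDerivAt_mul_const (x := w) (t : ℂ)).neg.cexp).const_mul ((t : ℂ) ^ a)
    refine this.congr_deriv ?_
    simp only [hpow, Pi.neg_apply]
    ring

end CpowMulCexp

lemma mem_slitPlane_of_nonneg_re_of_ne_zero {z : ℂ} (hz : 0 ≤ z.re) (hz0 : z ≠ 0) :
    z ∈ slitPlane := by
  rcases hz.lt_or_eq with hz | hz
  · exact mem_slitPlane_iff.2 (Or.inl hz)
  · exact mem_slitPlane_iff.2 (Or.inr fun him => hz0 (Complex.ext hz.symm him))

lemma tendsto_ofReal_nhdsGT_one : Tendsto (fun r : ℝ => (r : ℂ)) (𝓝[>] 1) (𝓝[≠] 1) :=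
  tendsto_nhdsWithin_iff.2
    ⟨(continuous_ofReal.tendsto' 1 1 ofReal_one).mono_left nhdsWithin_le_nhds,
      eventually_nhdsWithin_of_forall fun r (hr : 1 < r) => by
        simpa [← ofReal_one] using hr.ne'⟩

theorem integral_Ioi_ofReal_cpow_mul_cexp {s z : ℂ} (hs : 0 < s.re) (hz : 0 < z.re) :
    ∫ t in Ioi (0 : ℝ), (t : ℂ) ^ (s - 1) * cexp (-(z * t)) = Complex.Gamma s / z ^ s := by
  set U : Set ℂ := {w | 0 < w.re}
  have hU : IsOpen U := isOpen_lt continuous_const continuous_re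
  have hs1 : -1 < (s - 1).re := by simp only [sub_re, one_re]; linarith
  have hG : AnalyticOnNhd ℂ
      (fun w : ℂ => ∫ t in Ioi (0 : ℝ), (t : ℂ) ^ (s - 1) * cexp (-(w * t))) U :=
    DifferentiableOn.analyticOnNhd (fun w hw => (hasDerivAt_integral_Ioi_ofReal_cpow_mul_cexp hs1
      hw).differentiableAt.differentiableWithinAt) hU
  have hg : AnalyticOnNhd ℂ (fun w : ℂ => Complex.Gamma s / w ^ s) U := by
    refine DifferentiableOn.analyticOnNhd (fun w (hw : 0 < w.re) => ?_) hU
    have hw0 : w ≠ 0 := fun h => by simp [h] at hw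
    exact ((differentiableAt_const _).div (differentiableAt_id.cpow_const
      (mem_slitPlane_iff.2 (Or.inl hw))) (cpow_ne_zero_iff.2 (Or.inl hw0))).differentiableWithinAt
  have hreal : ∀ r : ℝ, 0 < r →
      ∫ t in Ioi (0 : ℝ), (t : ℂ) ^ (s - 1) * cexp (-(r * t)) = Complex.Gamma s / (r : ℂ) ^ s := by
    intro r hr
    rw [integral_cpow_mul_exp_neg_mul_Ioi hs hr, one_div, inv_cpow _ _ (by
      rw [arg_ofReal_of_nonneg hr.le]; exact pi_ne_zero.symm), div_eq_inv_mul]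
  have hfreq : ∃ᶠ w in 𝓝[≠] (1 : ℂ), (∫ t in Ioi (0 : ℝ), (t : ℂ) ^ (s - 1) * cexp (-(w * t))) =
      Complex.Gamma s / w ^ s :=
    tendsto_ofReal_nhdsGT_one.frequently <| Eventually.frequently <|
      eventually_nhdsWithin_of_forall (s := Ioi 1) fun r hr => hreal r (zero_lt_one.trans hr)
  exact hG.eqOn_of_preconnected_of_frequently_eq hg (convex_halfSpace_re_gt 0).isPreconnected
    (by simp [U]) hfreq hz

section Truncated

variable {a z : ℂ}

lemma intervalIntegrable_ofReal_cpow_mul_cexp (ha : -1 < a.re) (b c : ℝ) :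
    IntervalIntegrable (fun t : ℝ => (t : ℂ) ^ a * cexp (-(z * t))) volume b c :=
  (intervalIntegral.intervalIntegrable_cpow' ha).mul_continuousOn (by fun_prop)

lemma hasDerivAt_ofReal_cpow {t : ℝ} (ht : 0 < t) (a : ℂ) :
    HasDerivAt (fun y : ℝ => (y : ℂ) ^ a) (a * (t : ℂ) ^ (a - 1)) t := by
  simpa using ((hasDerivAt_id (t : ℂ)).cpow_const (c := a) (ofReal_mem_slitPlane.2 ht)).comp_ofReal

lemma intervalIntegral_one_ofReal_cpow_mul_cexp (hz : z ≠ 0) {T : ℝ} (hT : 0 < T) :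
    ∫ t in (1 : ℝ)..T, (t : ℂ) ^ a * cexp (-(z * t)) =
      cexp (-z) / z - (T : ℂ) ^ a * cexp (-(z * T)) / z +
        a / z * ∫ t in (1 : ℝ)..T, (t : ℂ) ^ (a - 1) * cexp (-(z * t)) := by
  have hpos : ∀ t ∈ uIcc (1 : ℝ) T, 0 < t := fun t ht =>
    lt_of_lt_of_le (lt_min one_pos hT) ht.1
  have hv : ∀ t : ℝ, HasDerivAt (fun y : ℝ => -cexp (-(z * y)) / z) (cexp (-(z * t))) t := by
    intro t
    have hexp : HasDerivAt (fun w : ℂ => cexp (-(z * w))) (cexp (-(z * t)) * -z) t :=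
      ((hasDerivAt_id (t : ℂ)).const_mul z).neg.cexp.congr_deriv (by simp)
    have := (hexp.neg.div_const z).comp_ofReal
    exact this.congr_deriv (by field_simp)
  have hu' : IntervalIntegrable (fun t : ℝ => a * (t : ℂ) ^ (a - 1)) volume 1 T :=
    ContinuousOn.intervalIntegrable fun t ht =>
      (continuousAt_const.mul ((continuousAt_ofReal_cpow_const _ _
        (Or.inr (hpos t ht).ne')))).continuousWithinAt
  rw [intervalIntegral.integral_mul_deriv_eq_deriv_mul
    (fun t ht => hasDerivAt_ofReal_cpow (hpos t ht) a) (fun t _ => hv t) hu'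
    (Continuous.intervalIntegrable (by fun_prop) _ _)]
  have hint : ∫ t in (1 : ℝ)..T, a * (t : ℂ) ^ (a - 1) * (-cexp (-(z * t)) / z) =
      -(a / z) * ∫ t in (1 : ℝ)..T, (t : ℂ) ^ (a - 1) * cexp (-(z * t)) := by
    rw [← intervalIntegral.integral_const_mul]
    congr 1 with t
    ring
  rw [hint, ofReal_one, one_cpow, mul_one]
  ring

lemma tendsto_ofReal_cpow_mul_cexp_atTop (ha : a.re < 0) (hz : 0 ≤ z.re) :
    Tendsto (fun T : ℝ => (T : ℂ) ^ a * cexp (-(z * T))) atTop (𝓝 0) := by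
  have hpow := tendsto_rpow_neg_atTop (neg_pos.2 ha)
  rw [neg_neg] at hpow
  refine squeeze_zero_norm' ?_ hpow
  filter_upwards [eventually_gt_atTop 0] with T hT
  exact norm_ofReal_cpow_mul_cexp_le hT hz

lemma tendsto_intervalIntegral_one_ofReal_cpow_mul_cexp (ha : a.re < 0) (hz : 0 ≤ z.re)
    (hz0 : z ≠ 0) :
    Tendsto (fun T : ℝ => ∫ t in (1 : ℝ)..T, (t : ℂ) ^ a * cexp (-(z * t))) atTop
      (𝓝 (cexp (-z) / z + a / z * ∫ t in Ioi (1 : ℝ), (t : ℂ) ^ (a - 1) * cexp (-(z * t)))) := by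
  have htail : IntegrableOn (fun t : ℝ => (t : ℂ) ^ (a - 1) * cexp (-(z * t))) (Ioi 1) :=
    integrableOn_ofReal_cpow_mul_cexp (Ioi_subset_Ioi zero_le_one) measurableSet_Ioi
      (integrableOn_Ioi_rpow_of_lt (by simp only [sub_re, one_re]; linarith) one_pos) hz
  have hlim := ((tendsto_ofReal_cpow_mul_cexp_atTop ha hz).div_const z).const_sub (cexp (-z) / z)
    |>.add ((intervalIntegral_tendsto_integral_Ioi 1 htail tendsto_id).const_mul (a / z))
  rw [zero_div, sub_zero] at hlim
  refine hlim.congr' ?_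
  filter_upwards [eventually_gt_atTop 0] with T hT
  rw [intervalIntegral_one_ofReal_cpow_mul_cexp hz0 hT, id]

end Truncated

/-- `∫₀^∞ t^(s-1) e^(-zt) dt` with the tail `∫₁^∞` integrated by parts once; every integral in
this expression converges absolutely for `0 < re s < 1` and `0 ≤ re z`, `z ≠ 0`. -/
noncomputable def regularizedGammaIntegral (s z : ℂ) : ℂ :=
  (∫ t in (0 : ℝ)..1, (t : ℂ) ^ (s - 1) * cexp (-(z * t))) +
    (cexp (-z) / z + (s - 1) / z * ∫ t in Ioi (1 : ℝ), (t : ℂ) ^ (s - 1 - 1) * cexp (-(z * t)))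

section Regularized

variable {s z : ℂ}

lemma tendsto_intervalIntegral_regularizedGammaIntegral (hs0 : 0 < s.re) (hs1 : s.re < 1)
    (hz : 0 ≤ z.re) (hz0 : z ≠ 0) :
    Tendsto (fun T : ℝ => ∫ t in (0 : ℝ)..T, (t : ℂ) ^ (s - 1) * cexp (-(z * t))) atTop
      (𝓝 (regularizedGammaIntegral s z)) := by
  have hre : -1 < (s - 1).re := by simp only [sub_re, one_re]; linarith
  refine ((tendsto_intervalIntegral_one_ofReal_cpow_mul_cexp
    (by simp only [sub_re, one_re]; linarith) hz hz0).const_add _).congr fun T => ?_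
  exact intervalIntegral.integral_add_adjacent_intervals
    (intervalIntegrable_ofReal_cpow_mul_cexp hre 0 1)
    (intervalIntegrable_ofReal_cpow_mul_cexp hre 1 T)

lemma regularizedGammaIntegral_of_pos_re (hs0 : 0 < s.re) (hs1 : s.re < 1) (hz : 0 < z.re) :
    regularizedGammaIntegral s z = Complex.Gamma s / z ^ s := by
  have hz0 : z ≠ 0 := fun h => by simp [h] at hz
  refine tendsto_nhds_unique
    (tendsto_intervalIntegral_regularizedGammaIntegral hs0 hs1 hz.le hz0) ?_
  rw [← integral_Ioi_ofReal_cpow_mul_cexp hs0 hz]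
  exact intervalIntegral_tendsto_integral_Ioi 0
    (integrableOn_Ioi_ofReal_cpow_mul_cexp (by simp only [sub_re, one_re]; linarith) hz) tendsto_id

lemma continuousOn_regularizedGammaIntegral (hs0 : 0 < s.re) (hs1 : s.re < 1) :
    ContinuousOn (regularizedGammaIntegral s) ({z | 0 ≤ z.re} \ {0}) := by
  have hhead : ContinuousOn
      (fun z : ℂ => ∫ t in (0 : ℝ)..1, (t : ℂ) ^ (s - 1) * cexp (-(z * t))) {z | 0 ≤ z.re} := by
    simp only [intervalIntegral.integral_of_le zero_le_one]
    refine continuousOn_setIntegral_ofReal_cpow_mul_cexp Ioc_subset_Ioi_self measurableSet_Ioc ?_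
    rw [← intervalIntegrable_iff_integrableOn_Ioc_of_le zero_le_one]
    exact intervalIntegral.intervalIntegrable_rpow' (by simp only [sub_re, one_re]; linarith)
  have htail : ContinuousOn
      (fun z : ℂ => ∫ t in Ioi (1 : ℝ), (t : ℂ) ^ (s - 1 - 1) * cexp (-(z * t))) {z | 0 ≤ z.re} :=
    continuousOn_setIntegral_ofReal_cpow_mul_cexp (Ioi_subset_Ioi zero_le_one) measurableSet_Ioi
      (integrableOn_Ioi_rpow_of_lt (by simp only [sub_re, one_re]; linarith) one_pos)
  have hne : ∀ z ∈ {z : ℂ | 0 ≤ z.re} \ {0}, z ≠ 0 := fun _ hz => hz.2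
  exact (hhead.mono sdiff_subset).add
    (((Complex.continuous_exp.comp continuous_neg).continuousOn.div continuousOn_id hne).add
      ((continuousOn_const.div continuousOn_id hne).mul (htail.mono sdiff_subset)))

lemma regularizedGammaIntegral_eq (hs0 : 0 < s.re) (hs1 : s.re < 1) (hz : 0 ≤ z.re)
    (hz0 : z ≠ 0) : regularizedGammaIntegral s z = Complex.Gamma s / z ^ s := by
  refine Set.EqOn.of_subset_closure (s := {z : ℂ | 0 < z.re})
    (fun w hw => regularizedGammaIntegral_of_pos_re hs0 hs1 hw)
    (continuousOn_regularizedGammaIntegral hs0 hs1) ?_ ?_ ?_ ⟨hz, hz0⟩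
  · refine continuousOn_const.div (fun w hw => ?_) fun w hw => cpow_ne_zero_iff.2 (Or.inl hw.2)
    exact (continuousAt_cpow_const
      (mem_slitPlane_of_nonneg_re_of_ne_zero hw.1 hw.2)).continuousWithinAt
  · exact fun w (hw : 0 < w.re) => ⟨hw.le, fun h : w = 0 => hw.ne' (by rw [h, zero_re])⟩
  · rw [closure_setOfPred_lt_re]
    exact sdiff_subset

end Regularized

theorem tendsto_intervalIntegral_ofReal_cpow_mul_cexp {s z : ℂ} (hs0 : 0 < s.re) (hs1 : s.re < 1)
    (hz : 0 ≤ z.re) (hz0 : z ≠ 0) :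
    Tendsto (fun T : ℝ => ∫ t in (0 : ℝ)..T, (t : ℂ) ^ (s - 1) * cexp (-(z * t))) atTop
      (𝓝 (Complex.Gamma s / z ^ s)) :=
  regularizedGammaIntegral_eq hs0 hs1 hz hz0 ▸
    tendsto_intervalIntegral_regularizedGammaIntegral hs0 hs1 hz hz0

lemma ofReal_mul_cpow_of_log_eq {x : ℝ} (hx : 0 < x) {u : ℂ} (hu : u ≠ 0) {θ : ℝ}
    (hlog : log u = θ * I) (s : ℂ) : ((x : ℂ) * u) ^ s = (x : ℂ) ^ s * cexp (θ * s * I) := by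
  have hx0 : (x : ℂ) ≠ 0 := ofReal_ne_zero.2 hx.ne'
  rw [cpow_def_of_ne_zero (mul_ne_zero hx0 hu), cpow_def_of_ne_zero hx0, log_ofReal_mul hx hu,
    hlog, ofReal_log hx.le, ← Complex.exp_add]
  ring_nf

lemma inv_ofReal_mul_I_cpow_add_inv_ofReal_mul_neg_I_cpow {x : ℝ} (hx : 0 < x) (s : ℂ) :
    (((x : ℂ) * I) ^ s)⁻¹ + (((x : ℂ) * -I) ^ s)⁻¹ = 2 * Complex.cos (π * s / 2) / (x : ℂ) ^ s := by
  rw [ofReal_mul_cpow_of_log_eq hx I_ne_zero (θ := π / 2) (by rw [log_I]; push_cast; ring),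
    ofReal_mul_cpow_of_log_eq hx (neg_ne_zero.2 I_ne_zero) (θ := -(π / 2))
      (by rw [log_neg_I]; push_cast; ring), Complex.cos]
  simp only [mul_inv, ← Complex.exp_neg]
  push_cast
  ring_nf

theorem stmt0 (s : ℂ) (hs0 : 0 < s.re) (hs1 : s.re < 1) (x : ℝ) (hx : 0 < x) :
    Filter.Tendsto (fun T : ℝ => ∫ t in (0 : ℝ)..T, (t : ℂ) ^ (s - 1) * Real.cos (x * t))
      Filter.atTop
      (nhds (Complex.Gamma s * Complex.cos (π * s / 2) / (x : ℂ) ^ s)) := by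
  have hx0 : (x : ℂ) ≠ 0 := ofReal_ne_zero.2 hx.ne'
  have hlim := ((tendsto_intervalIntegral_ofReal_cpow_mul_cexp hs0 hs1 (z := x * I) (by simp)
    (mul_ne_zero hx0 I_ne_zero)).add (tendsto_intervalIntegral_ofReal_cpow_mul_cexp hs0 hs1
      (z := x * -I) (by simp) (mul_ne_zero hx0 (neg_ne_zero.2 I_ne_zero)))).div_const 2
  have hre : -1 < (s - 1).re := by simp only [sub_re, one_re]; linarith
  convert hlim using 2 with T
  · rw [← intervalIntegral.integral_add (intervalIntegrable_ofReal_cpow_mul_cexp hre 0 T)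
      (intervalIntegrable_ofReal_cpow_mul_cexp hre 0 T), ← intervalIntegral.integral_div]
    congr 1 with t
    rw [ofReal_cos, Complex.cos]
    push_cast
    ring_nf
  · rw [show ∀ a b : ℂ, Complex.Gamma s / a + Complex.Gamma s / b = Complex.Gamma s * (a⁻¹ + b⁻¹)
      from fun _ _ => by ring, inv_ofReal_mul_I_cpow_add_inv_ofReal_mul_neg_I_cpow hx]
    ring
end

section
/- The series E(s) := π^(-s/2) ∑_{n≥1} n^(-s) Γ(s/2, π n²) converges absolutely for every complex s, and defines an entire function of s. -/
open MeasureTheory Real Complex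

/-!
For `Re s ≤ M + 1` and `x ≥ 1` the integrand of `Γ(s, x)` is at most `C_M e^(-t/2)`, so
`‖Γ(s, x)‖ ≤ 2 C_M e^(-x/2)`. Together with `n^(-Re s) ≤ n^M ≤ C_M e^(n/2)` this bounds the
`n`-th term by a multiple of `e^(-n)`, uniformly on vertical strips: the series converges
absolutely, and by the Weierstrass M-test its sum is entire, each term being entire because
`Γ(·, x)` (`x > 0`) is the Mellin transform of a function that vanishes near `0` and decays
exponentially.
-/

lemma upperGamma_eq_mellin (s : ℂ) {x : ℝ} (hx : 0 ≤ x) :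
    upperGamma s x = mellin ((Set.Ioi x).indicator fun t : ℝ => Complex.exp (-t)) s := by
  have hinner : (fun t : ℝ =>
        (t : ℂ) ^ (s - 1) • (Set.Ioi x).indicator (fun t : ℝ => Complex.exp (-t)) t) =
      (Set.Ioi x).indicator fun t : ℝ => (t : ℂ) ^ (s - 1) * Complex.exp (-t) := by
    ext t
    by_cases ht : t ∈ Set.Ioi x <;> simp [ht]
  rw [mellin, hinner, setIntegral_indicator measurableSet_Ioi, Set.Ioi_inter_Ioi,
    max_eq_right hx, upperGamma]

lemma differentiable_upperGamma {x : ℝ} (hx : 0 < x) :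
    Differentiable ℂ fun s => upperGamma s x := by
  intro s
  simp_rw [upperGamma_eq_mellin _ hx.le]
  set f := (Set.Ioi x).indicator fun t : ℝ => Complex.exp (-t)
  have hf_int : LocallyIntegrableOn f (Set.Ioi 0) := by
    refine (Integrable.locallyIntegrable ?_).locallyIntegrableOn _
    refine (integrable_indicator_iff measurableSet_Ioi).2 ?_
    simpa using integrableOn_exp_mul_complex_Ioi (a := -1) (by simp) x
  have hf_top : f =O[Filter.atTop] fun t => Real.exp (-1 * t) := by
    refine Asymptotics.IsBigO.of_bound 1 (Filter.Eventually.of_forall fun t => ?_)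
    by_cases ht : t ∈ Set.Ioi x <;> simp [f, ht, Complex.norm_exp, (Real.exp_pos _).le]
  have hf_bot : f =O[nhdsWithin 0 (Set.Ioi 0)] fun t => t ^ (-(s.re - 1)) := by
    refine Asymptotics.IsBigO.of_bound 0 ?_
    filter_upwards [Ioo_mem_nhdsGT hx] with t ht
    simp [f, ht.2.le]
  exact mellin_differentiableAt_of_isBigO_rpow_exp one_pos hf_int hf_top hf_bot (by linarith)

lemma rpow_le_mul_exp_half {M t : ℝ} (hM : 0 ≤ M) (ht : 0 ≤ t) :
    t ^ M ≤ (2 * (M + 1)) ^ M * Real.exp (t / 2) := by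
  set c := 2 * (M + 1)
  have hc : 0 < c := by positivity
  have hu : t / c ≤ Real.exp (t / c) := by linarith [Real.add_one_le_exp (t / c)]
  calc t ^ M = c ^ M * (t / c) ^ M := by
        rw [Real.div_rpow ht hc.le, mul_div_cancel₀ _ (Real.rpow_pos_of_pos hc M).ne']
    _ ≤ c ^ M * Real.exp (t / c * M) := by
        rw [Real.exp_mul]
        gcongr
    _ ≤ c ^ M * Real.exp (t / 2) := by
        gcongr
        rw [div_mul_eq_mul_div, div_le_div_iff₀ hc two_pos]
        nlinarith

lemma norm_upperGamma_le {s : ℂ} {M x : ℝ} (hM : 0 ≤ M) (hs : s.re ≤ M + 1) (hx : 1 ≤ x) :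
    ‖upperGamma s x‖ ≤ 2 * (2 * (M + 1)) ^ M * Real.exp (-(x / 2)) := by
  set C := (2 * (M + 1)) ^ M
  have h_le : ∀ t ∈ Set.Ioi x,
      ‖(t : ℂ) ^ (s - 1) * Complex.exp (-t)‖ ≤ C * Real.exp (-1 / 2 * t) := by
    intro t ht
    have ht1 : 1 ≤ t := hx.trans (le_of_lt ht)
    rw [norm_mul, Complex.norm_cpow_eq_rpow_re_of_pos (by linarith), Complex.norm_exp]
    simp only [Complex.sub_re, Complex.one_re, Complex.neg_re, Complex.ofReal_re]
    calc t ^ (s.re - 1) * Real.exp (-t) ≤ t ^ M * Real.exp (-t) := by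
          gcongr
          linarith
      _ ≤ C * Real.exp (t / 2) * Real.exp (-t) := by
          gcongr
          exact rpow_le_mul_exp_half hM (by linarith)
      _ = C * Real.exp (-1 / 2 * t) := by
          rw [mul_assoc, ← Real.exp_add]
          ring_nf
  calc ‖upperGamma s x‖ ≤ ∫ t in Set.Ioi x, C * Real.exp (-1 / 2 * t) :=
        norm_integral_le_of_norm_le ((integrableOn_exp_mul_Ioi (by norm_num) x).const_mul C)
          ((ae_restrict_iff' measurableSet_Ioi).2 (Filter.Eventually.of_forall h_le))
    _ = 2 * C * Real.exp (-(x / 2)) := by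
        rw [integral_const_mul, integral_exp_mul_Ioi (by norm_num)]
        ring_nf

lemma norm_term_le {s : ℂ} {M : ℝ} (hs : |s.re| ≤ M) (n : ℕ+) :
    ‖(n : ℂ) ^ (-s) * upperGamma (s / 2) (π * n ^ 2)‖ ≤
      2 * ((2 * (M + 1)) ^ M) ^ 2 * Real.exp (-n) := by
  set C := (2 * (M + 1)) ^ M
  have hM : 0 ≤ M := (abs_nonneg _).trans hs
  obtain ⟨hs_lo, hs_hi⟩ := abs_le.1 hs
  have hn : (1 : ℝ) ≤ n := Nat.one_le_cast.2 n.pos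
  have h_pow : ‖(n : ℂ) ^ (-s)‖ ≤ C * Real.exp (n / 2) := by
    rw [show (n : ℂ) = ((n : ℝ) : ℂ) by norm_cast,
      Complex.norm_cpow_eq_rpow_re_of_pos (by linarith), Complex.neg_re]
    calc (n : ℝ) ^ (-s.re) ≤ (n : ℝ) ^ M := Real.rpow_le_rpow_of_exponent_le hn (by linarith)
      _ ≤ C * Real.exp (n / 2) := rpow_le_mul_exp_half hM (by linarith)
  have h_gamma : ‖upperGamma (s / 2) (π * n ^ 2)‖ ≤ 2 * C * Real.exp (-(π * n ^ 2 / 2)) :=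
    norm_upperGamma_le hM (by rw [Complex.div_ofNat_re]; linarith) (by nlinarith [pi_gt_three])
  calc ‖(n : ℂ) ^ (-s) * upperGamma (s / 2) (π * n ^ 2)‖
      ≤ C * Real.exp (n / 2) * (2 * C * Real.exp (-(π * n ^ 2 / 2))) := by
        rw [norm_mul]
        gcongr
    _ = 2 * C ^ 2 * Real.exp (n / 2 - π * n ^ 2 / 2) := by
        rw [sub_eq_add_neg, Real.exp_add]
        ring
    _ ≤ 2 * C ^ 2 * Real.exp (-n) := by
        gcongr
        nlinarith [pi_gt_three]

lemma summable_exp_neg_pnat : Summable fun n : ℕ+ => Real.exp (-n) :=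
  Real.summable_exp_neg_nat.comp_injective PNat.coe_injective

lemma differentiable_term (n : ℕ+) :
    Differentiable ℂ fun s : ℂ => (n : ℂ) ^ (-s) * upperGamma (s / 2) (π * n ^ 2) :=
  (differentiable_neg.const_cpow (Or.inl (by exact_mod_cast n.ne_zero))).mul
    ((differentiable_upperGamma (by positivity)).comp (differentiable_id.div_const 2))

theorem stmt5 :
    (∀ s : ℂ, Summable fun n : ℕ+ => ‖(n : ℂ) ^ (-s) * upperGamma (s / 2) (π * n ^ 2)‖)
      ∧ Differentiable ℂ
          (fun s : ℂ =>
            (π : ℂ) ^ (-s / 2) * ∑' n : ℕ+, (n : ℂ) ^ (-s) * upperGamma (s / 2) (π * n ^ 2)) := by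
  have h_summable (M : ℝ) := summable_exp_neg_pnat.mul_left (2 * ((2 * (M + 1)) ^ M) ^ 2)
  refine ⟨fun s => (h_summable |s.re|).of_nonneg_of_le (fun _ => norm_nonneg _)
    (norm_term_le le_rfl), ?_⟩
  have h_tsum : Differentiable ℂ
      fun s : ℂ => ∑' n : ℕ+, (n : ℂ) ^ (-s) * upperGamma (s / 2) (π * n ^ 2) := by
    intro s₀
    have hU : IsOpen {s : ℂ | |s.re| < |s₀.re| + 1} :=
      isOpen_lt (continuous_abs.comp Complex.continuous_re) continuous_const
    refine (differentiableOn_tsum_of_summable_norm (h_summable _)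
      (fun n => (differentiable_term n).differentiableOn) hU
      fun n s hs => norm_term_le (le_of_lt hs) n).differentiableAt (hU.mem_nhds ?_)
    simp
  exact ((differentiable_neg.div_const 2).const_cpow
    (Or.inl (Complex.ofReal_ne_zero.2 pi_ne_zero))).mul h_tsum
end

section
/- For complex s with Re(s) > 1 and real a > 0, ∫₀^∞ e^(-sx) ∑_{n≥1} e^(-a n² e^(-2x)) dx = (a^(-s/2)/2) ∑_{n≥1} n^(-s) γ(s/2, a n²), where γ is the lower incomplete gamma function. -/
/-!
Substituting `u = c e^{-2x}` turns `∫₀^∞ e^{-sx} e^{-c e^{-2x}} dx` into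
`c^{-s/2}/2 · γ(s/2, c)`, so the identity holds term by term with `c = a n²`. To integrate
the series term by term it suffices that the integrals of the norms are summable: by the
same substitution with `s` replaced by `σ = Re s`, the `n`-th one is at most
`(a n²)^{-σ/2} Γ(σ/2) / 2`, and `∑ n^{-σ}` converges for `σ > 1`.
-/

open MeasureTheory Real Complex

open Set

lemma image_mul_exp_neg_two_mul_Ioi {c : ℝ} (hc : 0 < c) :
    (fun x : ℝ => c * rexp (-2 * x)) '' Ioi 0 = Ioo 0 c := by
  ext u
  constructor
  · rintro ⟨x, hx, rfl⟩
    exact ⟨by positivity,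
      mul_lt_of_lt_one_right hc (Real.exp_lt_one_iff.2 (by linarith [mem_Ioi.1 hx]))⟩
  · rintro ⟨hu0, huc⟩
    have hlog : Real.log (u / c) < 0 := Real.log_neg (div_pos hu0 hc) ((div_lt_one hc).2 huc)
    refine ⟨-Real.log (u / c) / 2, by simp only [mem_Ioi]; linarith, ?_⟩
    dsimp only
    rw [show -2 * (-Real.log (u / c) / 2) = Real.log (u / c) by ring,
      Real.exp_log (div_pos hu0 hc)]
    field_simp

lemma integral_Ioo_eq_integral_Ioi_comp_mul_exp {E : Type*} [NormedAddCommGroup E]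
    [NormedSpace ℝ E] {c : ℝ} (hc : 0 < c) (g : ℝ → E) :
    ∫ u in Ioo 0 c, g u
      = ∫ x in Ioi 0, (2 * (c * rexp (-2 * x))) • g (c * rexp (-2 * x)) := by
  have hderiv (x : ℝ) :
      HasDerivAt (fun x : ℝ => c * rexp (-2 * x)) (-2 * (c * rexp (-2 * x))) x := by
    simpa [mul_comm, mul_left_comm] using
      (((hasDerivAt_id' x).const_mul (-2 : ℝ)).exp).const_mul c
  have hinj : InjOn (fun x : ℝ => c * rexp (-2 * x)) (Ioi 0) := fun x _ y _ hxy => by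
    simpa [hc.ne'] using hxy
  rw [← image_mul_exp_neg_two_mul_Ioi hc, integral_image_eq_integral_abs_deriv_smul
    measurableSet_Ioi (fun x _ => (hderiv x).hasDerivWithinAt) hinj]
  refine setIntegral_congr_fun measurableSet_Ioi fun x _ => ?_
  rw [abs_mul, abs_of_pos (by positivity : 0 < c * rexp (-2 * x))]
  norm_num

-- No condition on `s`: the change of variables also transfers integrability, so when the
-- integrals do not converge both sides are the junk value `0`.
lemma integral_cexp_mul_exp_neg_mul_exp (s : ℂ) {c : ℝ} (hc : 0 < c) :
    ∫ x in Ioi (0 : ℝ), cexp (-s * x) * (rexp (-c * rexp (-2 * x)) : ℂ)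
      = (c : ℂ) ^ (-s / 2) / 2 * lowerGamma (s / 2) c := by
  rw [lowerGamma, intervalIntegral.integral_of_le hc.le, integral_Ioc_eq_integral_Ioo,
    integral_Ioo_eq_integral_Ioi_comp_mul_exp hc, ← integral_const_mul]
  refine setIntegral_congr_fun measurableSet_Ioi fun x _ => ?_
  have hu : 0 < c * rexp (-2 * x) := by positivity
  have hu' : ((c * rexp (-2 * x) : ℝ) : ℂ) ≠ 0 := ofReal_ne_zero.2 hu.ne'
  have hpow : (c : ℂ) ^ (-s / 2) * ((c * rexp (-2 * x) : ℝ) : ℂ) ^ (s / 2) = cexp (-s * x) := by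
    rw [cpow_def_of_ne_zero (ofReal_ne_zero.2 hc.ne'), cpow_def_of_ne_zero hu',
      ← ofReal_log hc.le, ← ofReal_log hu.le, ← Complex.exp_add,
      Real.log_mul hc.ne' (exp_ne_zero _), Real.log_exp]
    congr 1
    push_cast
    ring
  have hexp : ((rexp (-c * rexp (-2 * x)) : ℝ) : ℂ) = cexp (-((c * rexp (-2 * x) : ℝ) : ℂ)) := by
    push_cast
    ring_nf
  rw [real_smul, ← hpow, hexp, cpow_sub _ _ hu', cpow_one, ofReal_mul 2, ofReal_ofNat]
  generalize ((c * rexp (-2 * x) : ℝ) : ℂ) = U at hu' ⊢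
  field_simp

lemma integrableOn_cexp_mul_exp_neg_mul_exp {s : ℂ} (hs : 0 < s.re) {c : ℝ} (hc : 0 ≤ c) :
    IntegrableOn (fun x : ℝ => cexp (-s * x) * (rexp (-c * rexp (-2 * x)) : ℂ)) (Ioi 0) := by
  refine (exp_neg_integrableOn_Ioi 0 hs).mono' (by fun_prop) (ae_of_all _ fun x => ?_)
  rw [norm_mul, norm_exp, norm_real, Real.norm_of_nonneg (exp_pos _).le,
    show (-s * x).re = -s.re * x by simp]
  refine mul_le_of_le_one_right (exp_pos _).le (Real.exp_le_one_iff.2 ?_)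
  nlinarith [exp_pos (-2 * x)]

lemma norm_lowerGamma_le {s : ℂ} (hs : 0 < s.re) {x : ℝ} (hx : 0 ≤ x) :
    ‖lowerGamma s x‖ ≤ Real.Gamma s.re := by
  rw [lowerGamma, intervalIntegral.integral_of_le hx, Real.Gamma_eq_integral hs]
  refine (norm_integral_le_integral_norm _).trans ?_
  rw [setIntegral_congr_fun measurableSet_Ioc fun t (ht : t ∈ Ioc 0 x) => by
    rw [norm_mul, norm_cpow_eq_rpow_re_of_pos ht.1, ← ofReal_neg, norm_exp_ofReal, sub_re,
      one_re, mul_comm]]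
  refine setIntegral_mono_set (Real.GammaIntegral_convergent hs) ?_
    Ioc_subset_Ioi_self.eventuallyLE
  filter_upwards [ae_restrict_mem measurableSet_Ioi] with t (ht : 0 < t)
  positivity

lemma integral_norm_cexp_mul_exp_neg_mul_exp_le {s : ℂ} (hs : 0 < s.re) {c : ℝ} (hc : 0 < c) :
    ∫ x in Ioi (0 : ℝ), ‖cexp (-s * x) * (rexp (-c * rexp (-2 * x)) : ℂ)‖
      ≤ c ^ (-s.re / 2) / 2 * Real.Gamma (s.re / 2) := by
  have hI : ((∫ x in Ioi (0 : ℝ), ‖cexp (-s * x) * (rexp (-c * rexp (-2 * x)) : ℂ)‖ : ℝ) : ℂ)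
      = (c : ℂ) ^ (-(s.re : ℂ) / 2) / 2 * lowerGamma ((s.re : ℂ) / 2) c := by
    rw [← integral_cexp_mul_exp_neg_mul_exp _ hc, ← integral_complex_ofReal]
    refine setIntegral_congr_fun measurableSet_Ioi fun x _ => ?_
    rw [norm_mul, norm_exp, norm_real, Real.norm_of_nonneg (exp_pos _).le]
    push_cast
    simp
  have hre : 0 < ((s.re : ℂ) / 2).re := by simpa using hs
  rw [← Real.norm_of_nonneg (integral_nonneg fun _ => norm_nonneg _), ← norm_real, hI, norm_mul,
    norm_div, norm_cpow_eq_rpow_re_of_pos hc, Complex.norm_two]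
  have := norm_lowerGamma_le hre hc.le
  simp only [div_ofNat_re, neg_re, ofReal_re] at this ⊢
  gcongr

lemma ofReal_mul_sq_cpow_half {a : ℝ} (ha : 0 ≤ a) {y : ℝ} (hy : 0 < y) (s : ℂ) :
    ((a * y ^ 2 : ℝ) : ℂ) ^ (s / 2) = (a : ℂ) ^ (s / 2) * (y : ℂ) ^ s := by
  rw [sq, ← mul_assoc, ofReal_mul, mul_cpow_ofReal_nonneg (by positivity) hy.le, ofReal_mul,
    mul_cpow_ofReal_nonneg ha hy.le, mul_assoc, ← cpow_add _ _ (ofReal_ne_zero.2 hy.ne')]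
  ring_nf

lemma summable_integral_norm_cexp_mul_exp_neg_mul_sq_exp {s : ℂ} (hs : 1 < s.re) {a : ℝ}
    (ha : 0 < a) :
    Summable fun n : ℕ+ =>
      ∫ x in Ioi (0 : ℝ), ‖cexp (-s * x) * (rexp (-(a * n ^ 2) * rexp (-2 * x)) : ℂ)‖ := by
  have hζ : Summable fun n : ℕ+ =>
      a ^ (-s.re / 2) / 2 * Real.Gamma (s.re / 2) * (n : ℝ) ^ (-s.re) :=
    (summable_pnat_iff_summable_nat.2 (Real.summable_nat_rpow.2 (by linarith))).mul_left _
  refine hζ.of_nonneg_of_le (fun n => integral_nonneg fun _ => norm_nonneg _) fun n => ?_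
  have hn : (0 : ℝ) < n := by exact_mod_cast n.pos
  refine (integral_norm_cexp_mul_exp_neg_mul_exp_le (by linarith) (by positivity)).trans_eq ?_
  rw [Real.mul_rpow ha.le (by positivity), ← Real.rpow_natCast, ← Real.rpow_mul hn.le]
  ring_nf

theorem stmt7 (s : ℂ) (hs : 1 < s.re) (a : ℝ) (ha : 0 < a) :
    ∫ x in Set.Ioi (0 : ℝ),
        Complex.exp (-s * x) * ((∑' n : ℕ+, Real.exp (-a * n ^ 2 * Real.exp (-2 * x)) : ℝ) : ℂ)
      = (a : ℂ) ^ (-s / 2) / 2 * ∑' n : ℕ+, (n : ℂ) ^ (-s) * lowerGamma (s / 2) (a * n ^ 2) := by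
  have hc (n : ℕ+) : 0 < a * (n : ℝ) ^ 2 := by positivity
  calc _ = ∫ x in Ioi (0 : ℝ),
          ∑' n : ℕ+, cexp (-s * x) * (rexp (-(a * n ^ 2) * rexp (-2 * x)) : ℂ) := by
        simp_rw [ofReal_tsum, ← tsum_mul_left, neg_mul a]
    _ = ∑' n : ℕ+,
          ∫ x in Ioi (0 : ℝ), cexp (-s * x) * (rexp (-(a * n ^ 2) * rexp (-2 * x)) : ℂ) :=
        (integral_tsum_of_summable_integral_norm
          (fun n => integrableOn_cexp_mul_exp_neg_mul_exp (by linarith) (hc n).le)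
          (summable_integral_norm_cexp_mul_exp_neg_mul_sq_exp hs ha)).symm
    _ = ∑' n : ℕ+, (a : ℂ) ^ (-s / 2) / 2 * ((n : ℂ) ^ (-s) * lowerGamma (s / 2) (a * n ^ 2)) := by
        congr 1 with n
        rw [integral_cexp_mul_exp_neg_mul_exp s (hc n),
          ofReal_mul_sq_cpow_half ha.le (by positivity : (0 : ℝ) < n)]
        push_cast
        ring
    _ = _ := tsum_mul_left
end
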